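/- Let n ≥ 4 be an integer and let A = (a_{ij}) ∈ Δ_n^2. If a_{2,2} = 0, then a_{2,3} = 1 and a_{3,2} = 1. -/

import Mathlib

/-- The integer encoded (in binary, most significant digit first) by the `i`-th row
of the binary matrix `A`, i.e. `x_i = ∑_j a_{ij} 2^{m-j}` (1-indexed). -/
def rowVal {n m : ℕ} (A : Fin n → Fin m → Fin 2) (i : Fin n) : ℕ :=
  ∑ j : Fin m, (A i j : ℕ) * 2 ^ (m - 1 - (j : ℕ))

/-- The integer encoded by the `j`-th column of `A`, i.e. `y_j = ∑_i a_{ij} 2^{n-i}`. -/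
def colVal {n m : ℕ} (A : Fin n → Fin m → Fin 2) (j : Fin m) : ℕ :=
  ∑ i : Fin n, (A i j : ℕ) * 2 ^ (n - 1 - (i : ℕ))

/-- `A ∈ 𝔠_{n×m}`: rows and columns sorted in lexicographically nondecreasing order. -/
def memC {n m : ℕ} (A : Fin n → Fin m → Fin 2) : Prop :=
  Monotone (rowVal A) ∧ Monotone (colVal A)

/-- `A ∈ 𝔡_{n×m}`: rows and columns sorted in lexicographically nonincreasing order. -/
def memD {n m : ℕ} (A : Fin n → Fin m → Fin 2) : Prop :=
  Antitone (rowVal A) ∧ Antitone (colVal A)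

/-- `Λ_n^k`: n×n binary matrices with exactly `k` ones in each row and each column. -/
def lambdaSet (n k : ℕ) : Set (Fin n → Fin n → Fin 2) :=
  {A | (∀ i, ∑ j, (A i j : ℕ) = k) ∧ (∀ j, ∑ i, (A i j : ℕ) = k)}

/-- `Γ_n^k = 𝔠_{n×n} ∩ Λ_n^k`. -/
def GammaSet (n k : ℕ) : Set (Fin n → Fin n → Fin 2) :=
  {A | memC A} ∩ lambdaSet n k

/-- `Δ_n^k = 𝔡_{n×n} ∩ Λ_n^k`. -/
def DeltaSet (n k : ℕ) : Set (Fin n → Fin n → Fin 2) :=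
  {A | memD A} ∩ lambdaSet n k

/-- `γ(n,k) = |Γ_n^k|`. -/
noncomputable def gammaCard (n k : ℕ) : ℕ := (GammaSet n k).ncard

/-- `δ(n,k) = |Δ_n^k|`. -/
noncomputable def deltaCard (n k : ℕ) : ℕ := (DeltaSet n k).ncard

/-!
Comparing two binary columns reduces to the first row where they differ. Row 0 of `A` must be
`1 1 0 … 0`: otherwise the column holding the second one of row 0 would exceed an earlier column
that starts with `0`. If moreover `a₁₁ = a₁₂ = 0` (0-based), the second one of row 1 lies in some
column `j ≥ 3`; columns `2` and `j` agree in row 0 and column `j` wins in row 1, contradicting the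
ordering. The statement about `a₂₁` is the same statement for the transpose.
-/

open Finset Function

section BinaryValue

variable {n : ℕ}

-- `colVal A j` is `binVal (fun i ↦ A i j)` by definition.
def binVal (f : Fin n → Fin 2) : ℕ :=
  ∑ i, (f i : ℕ) * 2 ^ (n - 1 - (i : ℕ))

lemma two_pow_le_binVal {f : Fin n → Fin 2} {i : Fin n} (h : f i = 1) :
    2 ^ (n - 1 - (i : ℕ)) ≤ binVal f := by
  have := single_le_sum (f := fun j ↦ (f j : ℕ) * 2 ^ (n - 1 - (j : ℕ)))
    (fun _ _ ↦ Nat.zero_le _) (mem_univ i)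
  simpa [binVal, h] using this

lemma binVal_lt_two_pow {f : Fin n → Fin 2} {k : Fin n} (h : ∀ i ≤ k, f i = 0) :
    binVal f < 2 ^ (n - 1 - (k : ℕ)) := by
  set S := univ.filter (k < ·)
  have h_le : binVal f ≤ ∑ i ∈ S, 2 ^ (n - 1 - (i : ℕ)) := by
    rw [sum_filter]
    refine sum_le_sum fun i _ ↦ ?_
    split_ifs with hki
    · exact mul_le_of_le_one_left' (Nat.le_of_lt_succ (f i).isLt)
    · simp [h i (not_lt.mp hki)]
  have h_inj : Set.InjOn (fun i : Fin n ↦ n - 1 - (i : ℕ)) S := by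
    intro i _ j _ hij
    have := i.isLt; have := j.isLt
    exact Fin.ext (by simp only at hij; omega)
  rw [← sum_image h_inj] at h_le
  refine h_le.trans_lt (Nat.geomSum_lt le_rfl fun t ht ↦ ?_)
  obtain ⟨i, hi, rfl⟩ := mem_image.mp ht
  have := (mem_filter.mp hi).2
  have := i.isLt
  rw [Fin.lt_def] at *
  omega

lemma binVal_lt_binVal {f g : Fin n → Fin 2} {k : Fin n} (hf : ∀ i ≤ k, f i = 0)
    (hg : g k = 1) : binVal f < binVal g :=
  (binVal_lt_two_pow hf).trans_le (two_pow_le_binVal hg)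

end BinaryValue

section ZeroOneVectors

variable {ι : Type*} [Fintype ι] {f : ι → Fin 2}

lemma fin_two_eq_zero_or_one (x : Fin 2) : x = 0 ∨ x = 1 := by
  fin_cases x <;> simp

lemma exists_ne_eq_one_of_one_lt_sum (h : 1 < ∑ j, (f j : ℕ)) (a : ι) :
    ∃ j ≠ a, f j = 1 := by
  by_contra! hne
  have hzero : ∀ j ≠ a, f j = 0 := fun j hj ↦ (fin_two_eq_zero_or_one _).resolve_right (hne j hj)
  rw [sum_eq_single a (fun j _ hj ↦ by simp [hzero j hj]) (by simp)] at h
  have := (f a).isLt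
  omega

lemma eq_zero_of_sum_le_two (h : ∑ j, (f j : ℕ) ≤ 2) {a b j : ι} (ha : f a = 1) (hb : f b = 1)
    (hab : a ≠ b) (hja : j ≠ a) (hjb : j ≠ b) : f j = 0 := by
  classical
  refine (fin_two_eq_zero_or_one _).resolve_right fun hj ↦ ?_
  have h3 : ∑ x ∈ {a, b, j}, (f x : ℕ) = 3 := by
    rw [sum_insert (by simp [hab, hja.symm]), sum_pair hjb.symm]
    simp [ha, hb, hj]
  have := sum_le_sum_of_subset (f := fun x ↦ (f x : ℕ)) (subset_univ {a, b, j})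
  omega

end ZeroOneVectors

section Delta

variable {n m : ℕ}

lemma swap_mem_DeltaSet {k : ℕ} {A : Fin n → Fin n → Fin 2} (hA : A ∈ DeltaSet n k) :
    swap A ∈ DeltaSet n k :=
  ⟨⟨hA.1.2, hA.1.1⟩, hA.2.2, hA.2.1⟩

lemma lt_of_antitone_colVal {A : Fin n → Fin m → Fin 2} (hA : Antitone (colVal A))
    {a b : Fin m} {k : Fin n} (ha : ∀ i ≤ k, A i a = 0) (hb : A k b = 1) : b < a :=
  hA.reflect_lt (binVal_lt_binVal (f := fun i ↦ A i a) (g := fun i ↦ A i b) ha hb)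

lemma DeltaSet_two_zero_zero_and_zero_one (hn : 2 ≤ n) {A : Fin n → Fin n → Fin 2}
    (hA : A ∈ DeltaSet n 2) :
    A ⟨0, by omega⟩ ⟨0, by omega⟩ = 1 ∧ A ⟨0, by omega⟩ ⟨1, by omega⟩ = 1 := by
  obtain ⟨⟨-, hcol⟩, hrow, -⟩ := hA
  obtain ⟨j, hj₀, hj⟩ :=
    exists_ne_eq_one_of_one_lt_sum (f := A ⟨0, by omega⟩) (by simp [hrow]) ⟨0, by omega⟩
  have h_lt : ∀ a, A ⟨0, by omega⟩ a = 0 → j < a := fun a ha ↦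
    lt_of_antitone_colVal hcol
      (fun i hi ↦ by rwa [show i = ⟨0, by omega⟩ from Fin.ext (Nat.le_zero.mp hi)]) hj
  constructor <;> refine (fin_two_eq_zero_or_one _).resolve_left fun h ↦ ?_
  · exact absurd (h_lt _ h) (by simp [Fin.lt_def])
  · have := h_lt _ h
    rw [Fin.lt_def] at this
    exact hj₀ (Fin.ext (by simp only at this ⊢; omega))

lemma DeltaSet_two_one_two (hn : 3 ≤ n) {A : Fin n → Fin n → Fin 2} (hA : A ∈ DeltaSet n 2)
    (h₁₁ : A ⟨1, by omega⟩ ⟨1, by omega⟩ = 0) : A ⟨1, by omega⟩ ⟨2, by omega⟩ = 1 := by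
  obtain ⟨h₀₀, h₀₁⟩ := DeltaSet_two_zero_zero_and_zero_one (by omega) hA
  obtain ⟨⟨-, hcol⟩, hrow, -⟩ := hA
  have h₀₂ : A ⟨0, by omega⟩ ⟨2, by omega⟩ = 0 :=
    eq_zero_of_sum_le_two (hrow _).le h₀₀ h₀₁ (by simp) (by simp) (by simp)
  refine (fin_two_eq_zero_or_one _).resolve_left fun h₁₂ ↦ ?_
  obtain ⟨j, hj₀, hj⟩ :=
    exists_ne_eq_one_of_one_lt_sum (f := A ⟨1, by omega⟩) (by simp [hrow]) ⟨0, by omega⟩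
  have h_lt : j < ⟨2, by omega⟩ := by
    refine lt_of_antitone_colVal hcol (k := ⟨1, by omega⟩) (fun i hi ↦ ?_) hj
    obtain hi | hi : i = ⟨0, by omega⟩ ∨ i = ⟨1, by omega⟩ := by
      rw [Fin.le_def] at hi
      simp only [Fin.ext_iff] at hi ⊢
      omega
    exacts [hi ▸ h₀₂, hi ▸ h₁₂]
  have hj₁ : j = ⟨1, by omega⟩ := by
    rw [Fin.lt_def] at h_lt
    simp only [ne_eq, Fin.ext_iff] at hj₀ h_lt ⊢
    omega
  simp [hj₁, h₁₁] at hj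

end Delta

/-- Theorem (0-indexed): if `A ∈ Δ_n^2`, `n ≥ 4`, and `a_{11} = 0`, then `a_{12} = a_{21} = 1`. -/
theorem step_of_Delta_two (n : ℕ) (hn : 4 ≤ n) (A : Fin n → Fin n → Fin 2)
    (hA : A ∈ DeltaSet n 2) (h22 : A ⟨1, by omega⟩ ⟨1, by omega⟩ = 0) :
    A ⟨1, by omega⟩ ⟨2, by omega⟩ = 1 ∧ A ⟨2, by omega⟩ ⟨1, by omega⟩ = 1 :=
  ⟨DeltaSet_two_one_two (by omega) hA h22,
    DeltaSet_two_one_two (by omega) (swap_mem_DeltaSet hA) h22⟩
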